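/- (Preservation) Let H be a mesh, τ_1 a distributed type with H ⊢ τ_1, and τ_1 →^p τ_2 a collective operation step with p ∈ {allGather(i), dynSlice(i,x), allToAll(i,j)}. Then H ⊢ τ_2 and globaltype(τ_2) = globaltype(τ_1). -/

import Mathlib

/-! ## Meshes, index tuples, distributed dimensions and types -/

structure Mesh where
  axes : Finset String
  size : String → ℕ
  size_pos : ∀ x ∈ axes, 1 ≤ size x

def Mesh.hasAxis (H : Mesh) (x : String) (n : ℕ) : Prop :=
  x ∈ H.axes ∧ H.size x = n

abbrev IndexTuple (H : Mesh) : Type :=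
  {ι : String → ℕ // ∀ x : String, (x ∈ H.axes → ι x < H.size x) ∧ (x ∉ H.axes → ι x = 0)}

structure Dim where
  tile : ℕ
  axes : List String
  global : ℕ
deriving DecidableEq

abbrev DType := List Dim

def Mesh.WFDim (H : Mesh) (d : Dim) : Prop :=
  1 ≤ d.tile ∧ d.axes.Nodup ∧ (∀ x ∈ d.axes, x ∈ H.axes) ∧
    d.tile * (d.axes.map H.size).prod = d.global

def Mesh.WFType (H : Mesh) (τ : DType) : Prop :=
  (∀ d ∈ τ, H.WFDim d) ∧ List.Pairwise (fun d e => ∀ x ∈ d.axes, x ∉ e.axes) τ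

def globaltype (τ : DType) : List ℕ := τ.map Dim.global
def localtype (τ : DType) : List ℕ := τ.map Dim.tile
def localsize (τ : DType) : ℕ := (τ.map Dim.tile).prod

def typeAxes : DType → List String
  | [] => []
  | d :: τ => d.axes ++ typeAxes τ

/-- Base offset map of a distributed dimension, `⟦c{xs}n⟧_D`. -/
def dimOffset (H : Mesh) : ℕ → List String → (String → ℕ) → ℕ
  | _, [], _ => 0
  | c, x :: xs, ι => c * ι x + dimOffset H (c * H.size x) xs ι

abbrev BOM (H : Mesh) : Type := IndexTuple H → List ℕ

/-- Base offset map of a distributed type, `⟦τ⟧_T`. -/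
def typeOffset (H : Mesh) (τ : DType) : BOM H :=
  fun ι => τ.map (fun d => dimOffset H d.tile d.axes ι.val)

/-! ## Collective operations (high-level typing rules) -/

inductive Label where
  | allGather (i : ℕ)
  | dynSlice (i : ℕ) (x : String)
  | allToAll (i j : ℕ)
  | allPermute
deriving DecidableEq

inductive OpKind where
  | gather | slice | toAll | permute
deriving DecidableEq

def Label.kind : Label → OpKind
  | .allGather _ => .gather
  | .dynSlice _ _ => .slice
  | .allToAll _ _ => .toAll
  | .allPermute => .permute

inductive Step (H : Mesh) : Label → DType → DType → Prop where
  | allGather {τ : DType} (i : ℕ) {c : ℕ} {x : String} {xs : List String} {s n : ℕ}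
      (hwf : H.WFType τ) (hx : H.hasAxis x n)
      (hi : τ[i]? = some ⟨c, x :: xs, s⟩) :
      Step H (.allGather i) τ (τ.set i ⟨c * n, xs, s⟩)
  | dynSlice {τ : DType} (i : ℕ) (x : String) {c : ℕ} {xs : List String} {s n : ℕ}
      (hwf : H.WFType τ) (hx : H.hasAxis x n) (hfresh : x ∉ typeAxes τ)
      (hi : τ[i]? = some ⟨c * n, xs, s⟩) :
      Step H (.dynSlice i x) τ (τ.set i ⟨c, x :: xs, s⟩)
  | allToAll {τ : DType} (i j : ℕ) {ci : ℕ} {x : String} {xsi : List String} {si cj : ℕ}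
      {xsj : List String} {sj n : ℕ}
      (hwf : H.WFType τ) (hij : i ≠ j) (hx : H.hasAxis x n)
      (hi : τ[i]? = some ⟨ci, x :: xsi, si⟩)
      (hj : τ[j]? = some ⟨cj, xsj, sj⟩)
      (hdvd : n ∣ cj) :
      Step H (.allToAll i j) τ ((τ.set i ⟨ci * n, xsi, si⟩).set j ⟨cj / n, x :: xsj, sj⟩)
  | allPermute {τ₁ τ₂ : DType}
      (hwf1 : H.WFType τ₁) (hwf2 : H.WFType τ₂)
      (hl : localtype τ₁ = localtype τ₂) (hg : globaltype τ₁ = globaltype τ₂) :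
      Step H .allPermute τ₁ τ₂

/-! ## Sequences of collective operations -/

inductive CSeq (H : Mesh) : DType → DType → Type where
  | nil (τ : DType) : CSeq H τ τ
  | cons {τ₁ τ₂ τ₃ : DType} (p : Label) (h : Step H p τ₁ τ₂) (s : CSeq H τ₂ τ₃) : CSeq H τ₁ τ₃

def CSeq.labels {H : Mesh} : {τ₁ τ₂ : DType} → CSeq H τ₁ τ₂ → List Label
  | _, _, .nil _ => []
  | _, _, .cons p _ s => p :: s.labels

def CSeq.typesList {H : Mesh} : {τ₁ τ₂ : DType} → CSeq H τ₁ τ₂ → List DType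
  | _, _, .nil τ => [τ]
  | τ, _, .cons _ _ s => τ :: s.typesList

/-- The height 𝔥 of a sequence: the maximum `localsize` over all types in it. -/
def CSeq.height {H : Mesh} {τ₁ τ₂ : DType} (s : CSeq H τ₁ τ₂) : ℕ :=
  (s.typesList.map localsize).foldr max 0

/-- Cost of a single step with source `σ₁` and target `σ₂`. -/
def stepCost (p : Label) (σ₁ σ₂ : DType) : ℕ :=
  match p with
  | .allGather _ => localsize σ₂
  | .dynSlice _ _ => 0
  | .allToAll _ _ => localsize σ₁
  | .allPermute => localsize σ₁

def CSeq.cost {H : Mesh} : {τ₁ τ₂ : DType} → CSeq H τ₁ τ₂ → ℕ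
  | _, _, .nil _ => 0
  | _, _, @CSeq.cons _ σ₁ σ₂ _ p _ s => stepCost p σ₁ σ₂ + s.cost

/-- Normal form: labels matched by `dynSlice* {allToAll | allPermute}* allGather*`. -/
def NormalFormK (ks : List OpKind) : Prop :=
  ∃ a b c : List OpKind, ks = a ++ b ++ c ∧
    (∀ k ∈ a, k = OpKind.slice) ∧
    (∀ k ∈ b, k = OpKind.toAll ∨ k = OpKind.permute) ∧
    (∀ k ∈ c, k = OpKind.gather)

/-! ## Weak collectives -/

/-- Equivalence of base offset maps. -/
def bomEquiv (H : Mesh) (β₁ β₂ : BOM H) : Prop :=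
  ∃ π : Equiv.Perm (IndexTuple H), β₂ = β₁ ∘ π

/-- The weak collective relation `⟦τ₁⟧_E ▶^p ⟦τ₂⟧_E`, represented on types. -/
def WeakStep (H : Mesh) (p : Label) (τ₁ τ₂ : DType) : Prop :=
  p ≠ Label.allPermute ∧ H.WFType τ₁ ∧ H.WFType τ₂ ∧
  ∃ σ₁ σ₂ : DType, Step H p σ₁ σ₂ ∧
    bomEquiv H (typeOffset H σ₁) (typeOffset H τ₁) ∧
    bomEquiv H (typeOffset H σ₂) (typeOffset H τ₂)

inductive WkSeq (H : Mesh) : DType → DType → Type where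
  | nil (τ : DType) : WkSeq H τ τ
  | cons {τ₁ τ₂ τ₃ : DType} (p : Label) (h : WeakStep H p τ₁ τ₂) (s : WkSeq H τ₂ τ₃) :
      WkSeq H τ₁ τ₃

def WkSeq.labels {H : Mesh} : {τ₁ τ₂ : DType} → WkSeq H τ₁ τ₂ → List Label
  | _, _, .nil _ => []
  | _, _, .cons p _ s => p :: s.labels

def WkSeq.typesList {H : Mesh} : {τ₁ τ₂ : DType} → WkSeq H τ₁ τ₂ → List DType
  | _, _, .nil τ => [τ]
  | τ, _, .cons _ _ s => τ :: s.typesList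

def WkSeq.height {H : Mesh} {τ₁ τ₂ : DType} (s : WkSeq H τ₁ τ₂) : ℕ :=
  (s.typesList.map localsize).foldr max 0

def WkSeq.cost {H : Mesh} : {τ₁ τ₂ : DType} → WkSeq H τ₁ τ₂ → ℕ
  | _, _, .nil _ => 0
  | _, _, @WkSeq.cons _ σ₁ σ₂ _ p _ s => stepCost p σ₁ σ₂ + s.cost

/-! ## Low-level MPI-style collectives on device assignments -/

abbrev DevMap (H : Mesh) (D : Type) := IndexTuple H ≃ D

structure DevAssign (H : Mesh) (D : Type) where
  dmap : DevMap H D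
  bom : BOM H

inductive LLabel where
  | allGather (x : String)
  | allToAll (x : String) (j : ℕ)
  | dynSlice (i : ℕ) (x : String)
  | allPermute
deriving DecidableEq

def LLabel.kind : LLabel → OpKind
  | .allGather _ => .gather
  | .allToAll _ _ => .toAll
  | .dynSlice _ _ => .slice
  | .allPermute => .permute

inductive LStep (H : Mesh) (D : Type) : LLabel → DevAssign H D → DevAssign H D → Type where
  | gather (τ : DType) (i : ℕ) (c : ℕ) (ys : List String) (x : String) (xs : List String)
      (s n : ℕ) (φ φ' : DevMap H D)
      (hwf : H.WFType τ) (hx : H.hasAxis x n)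
      (hi : τ[i]? = some ⟨c, ys ++ x :: xs, s⟩)
      (hmap : typeOffset H (τ.set i ⟨c, x :: (ys ++ xs), s⟩) ∘ ⇑φ'.symm
            = typeOffset H τ ∘ ⇑φ.symm) :
      LStep H D (.allGather x) ⟨φ, typeOffset H τ⟩
        ⟨φ', typeOffset H (τ.set i ⟨c * n, ys ++ xs, s⟩)⟩
  | toAll (τ : DType) (i j : ℕ) (ci : ℕ) (ys : List String) (x : String) (xs : List String)
      (si cj : ℕ) (xsj : List String) (sj n : ℕ) (φ φ' : DevMap H D)
      (hwf : H.WFType τ) (hij : i ≠ j) (hx : H.hasAxis x n)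
      (hi : τ[i]? = some ⟨ci, ys ++ x :: xs, si⟩)
      (hj : τ[j]? = some ⟨cj, xsj, sj⟩)
      (hdvd : n ∣ cj)
      (hmap : typeOffset H (τ.set i ⟨ci, x :: (ys ++ xs), si⟩) ∘ ⇑φ'.symm
            = typeOffset H τ ∘ ⇑φ.symm) :
      LStep H D (.allToAll x j) ⟨φ, typeOffset H τ⟩
        ⟨φ', typeOffset H ((τ.set i ⟨ci * n, ys ++ xs, si⟩).set j ⟨cj / n, x :: xsj, sj⟩)⟩
  | slice (τ : DType) (i : ℕ) (x : String) (c : ℕ) (xs : List String) (s n : ℕ)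
      (φ : DevMap H D)
      (hwf : H.WFType τ) (hx : H.hasAxis x n) (hfresh : x ∉ typeAxes τ)
      (hi : τ[i]? = some ⟨c * n, xs, s⟩) :
      LStep H D (.dynSlice i x) ⟨φ, typeOffset H τ⟩ ⟨φ, typeOffset H (τ.set i ⟨c, x :: xs, s⟩)⟩
  | permute (τ : DType) (ρ : Equiv.Perm (IndexTuple H)) (β' : BOM H)
      (φ φ' : DevMap H D) (π : Equiv.Perm D)
      (hwf : H.WFType τ)
      (hmap : β' ∘ ⇑φ'.symm = (typeOffset H τ ∘ ⇑ρ) ∘ ⇑φ.symm ∘ ⇑π) :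
      LStep H D .allPermute ⟨φ, typeOffset H τ ∘ ⇑ρ⟩ ⟨φ', β'⟩

def LStep.cost {H : Mesh} {D : Type} :
    {l : LLabel} → {a b : DevAssign H D} → LStep H D l a b → ℕ
  | _, _, _, .gather τ i c ys x xs s n .. => localsize (τ.set i ⟨c * n, ys ++ xs, s⟩)
  | _, _, _, .toAll τ .. => localsize τ
  | _, _, _, .slice .. => 0
  | _, _, _, .permute τ .. => localsize τ

inductive LoSeq (H : Mesh) (D : Type) : DevAssign H D → DevAssign H D → Type where
  | nil (a : DevAssign H D) : LoSeq H D a a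
  | cons {a b c : DevAssign H D} (l : LLabel) (st : LStep H D l a b) (s : LoSeq H D b c) :
      LoSeq H D a c

def LoSeq.labels {H : Mesh} {D : Type} : {a b : DevAssign H D} → LoSeq H D a b → List LLabel
  | _, _, .nil _ => []
  | _, _, .cons l _ s => l :: s.labels

def LoSeq.states {H : Mesh} {D : Type} : {a b : DevAssign H D} → LoSeq H D a b → List (DevAssign H D)
  | _, _, .nil a => [a]
  | a, _, .cons _ _ s => a :: s.states

def LoSeq.cost {H : Mesh} {D : Type} : {a b : DevAssign H D} → LoSeq H D a b → ℕ
  | _, _, .nil _ => 0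
  | _, _, .cons _ st s => st.cost + s.cost

/-!
A distributed type is well formed exactly when every dimension is well formed and the
concatenation `typeAxes τ` of all its axis lists has no duplicates. Each collective rewrites
one or two dimensions so that `typeAxes` only loses an axis (`allGather`), gains an axis not
yet present (`dynSlice`), or moves an axis from one dimension to another (`allToAll`), so
duplicate-freeness survives. The tile is rescaled by the size of that axis, which keeps
`tile * ∏ sizes = global` with the global size untouched.
-/

lemma typeAxes_eq_flatten (τ : DType) : typeAxes τ = (τ.map Dim.axes).flatten := by
  induction τ with
  | nil => rfl
  | cons d τ ih => simp [typeAxes, ih]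

lemma nodup_axes_of_mem {τ : DType} {d : Dim} (hτ : (typeAxes τ).Nodup) (hd : d ∈ τ) :
    d.axes.Nodup :=
  (List.nodup_flatten.1 (typeAxes_eq_flatten τ ▸ hτ)).1 _ (List.mem_map_of_mem hd)

lemma typeAxes_set_append_perm {τ : DType} {i : ℕ} {d : Dim} (h : τ[i]? = some d) (d' : Dim) :
    (typeAxes (τ.set i d') ++ d.axes).Perm (typeAxes τ ++ d'.axes) := by
  induction τ generalizing i with
  | nil => simp at h
  | cons e τ ih =>
    cases i with
    | zero =>
      cases h
      simp only [typeAxes, List.set_cons_zero, List.perm_iff_count, List.count_append]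
      intro a
      omega
    | succ i => simpa [typeAxes] using (ih h).append_left e.axes

lemma typeAxes_set_append_singleton_perm {τ : DType} {i : ℕ} {d d' : Dim} {x : String}
    (h : τ[i]? = some d) (hd : d.axes = x :: d'.axes) :
    (typeAxes (τ.set i d') ++ [x]).Perm (typeAxes τ) := by
  have := typeAxes_set_append_perm h d'
  rw [hd, ← List.singleton_append, ← List.append_assoc] at this
  exact (List.perm_append_right_iff _).1 this

lemma typeAxes_set_perm_append_singleton {τ : DType} {i : ℕ} {d d' : Dim} {x : String}
    (h : τ[i]? = some d) (hd' : d'.axes = x :: d.axes) :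
    (typeAxes (τ.set i d')).Perm (typeAxes τ ++ [x]) := by
  have := typeAxes_set_append_perm h d'
  rw [hd', ← List.singleton_append, ← List.append_assoc] at this
  exact (List.perm_append_right_iff _).1 this

lemma globaltype_set {τ : DType} {i c c' : ℕ} {xs xs' : List String} {s : ℕ}
    (h : τ[i]? = some ⟨c, xs, s⟩) : globaltype (τ.set i ⟨c', xs', s⟩) = globaltype τ := by
  obtain ⟨hi, hτi⟩ := List.getElem?_eq_some_iff.1 h
  have hi' : i < (τ.map Dim.global).length := by simpa using hi
  have hs : s = τ[i].global := by rw [hτi]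
  simp only [globaltype, List.map_set, hs]
  rw [← List.getElem_map (h := hi'), List.set_getElem_self]

namespace Mesh

variable {H : Mesh}

lemma hasAxis.one_le {x : String} {n : ℕ} (hx : H.hasAxis x n) : 1 ≤ n :=
  hx.2 ▸ H.size_pos x hx.1

lemma wfType_iff_nodup_typeAxes {τ : DType} :
    H.WFType τ ↔ (∀ d ∈ τ, H.WFDim d) ∧ (typeAxes τ).Nodup := by
  rw [typeAxes_eq_flatten, List.nodup_flatten, List.pairwise_map]
  constructor
  · rintro ⟨hd, hpw⟩
    refine ⟨hd, ?_, hpw⟩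
    simpa using fun d hd' => (hd d hd').2.1
  · rintro ⟨hd, -, hpw⟩
    exact ⟨hd, hpw⟩

lemma WFDim.of_cons {c : ℕ} {x : String} {xs : List String} {s n : ℕ}
    (hd : H.WFDim ⟨c, x :: xs, s⟩) (hx : H.hasAxis x n) : H.WFDim ⟨c * n, xs, s⟩ := by
  obtain ⟨hc, hnd, hax, hprod⟩ := hd
  refine ⟨Nat.mul_pos hc hx.one_le, hnd.of_cons, fun y hy => hax y (.tail _ hy), ?_⟩
  simpa [hx.2, Nat.mul_assoc] using hprod

lemma WFDim.cons {c : ℕ} {x : String} {xs : List String} {s n : ℕ}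
    (hd : H.WFDim ⟨c * n, xs, s⟩) (hx : H.hasAxis x n) (hxs : x ∉ xs) :
    H.WFDim ⟨c, x :: xs, s⟩ := by
  obtain ⟨hc, hnd, hax, hprod⟩ := hd
  refine ⟨Nat.pos_of_mul_pos_right hc, hnd.cons hxs, ?_, ?_⟩
  · rintro y (_ | ⟨_, hy⟩)
    exacts [hx.1, hax y hy]
  · simpa [hx.2, Nat.mul_assoc] using hprod

lemma WFType.set {τ : DType} {i : ℕ} {d' : Dim} (hτ : H.WFType τ) (hd' : H.WFDim d')
    (hnd : (typeAxes (τ.set i d')).Nodup) : H.WFType (τ.set i d') := by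
  refine wfType_iff_nodup_typeAxes.2 ⟨fun e he => ?_, hnd⟩
  rcases List.mem_or_eq_of_mem_set he with he | rfl
  exacts [hτ.1 e he, hd']

lemma WFType.set_tail_axes {τ : DType} {i c : ℕ} {x : String} {xs : List String} {s n : ℕ}
    (hτ : H.WFType τ) (hx : H.hasAxis x n) (hi : τ[i]? = some ⟨c, x :: xs, s⟩) :
    H.WFType (τ.set i ⟨c * n, xs, s⟩) := by
  have hnd := (wfType_iff_nodup_typeAxes.1 hτ).2
  refine hτ.set ((hτ.1 _ (List.mem_of_getElem? hi)).of_cons hx) ?_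
  exact ((typeAxes_set_append_singleton_perm hi rfl).nodup_iff.2 hnd).of_append_left

lemma WFType.set_cons_axes_of_nodup {τ : DType} {i c : ℕ} {x : String} {xs : List String}
    {s n : ℕ} (hτ : H.WFType τ) (hx : H.hasAxis x n) (hd : H.WFDim ⟨c * n, xs, s⟩)
    (hi : i < τ.length) (hnd : (typeAxes (τ.set i ⟨c, x :: xs, s⟩)).Nodup) :
    H.WFType (τ.set i ⟨c, x :: xs, s⟩) := by
  have hxs : x ∉ xs := (List.nodup_cons.1 (nodup_axes_of_mem hnd (List.mem_set hi _))).1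
  exact hτ.set (hd.cons hx hxs) hnd

lemma WFType.set_cons_axes {τ : DType} {i c : ℕ} {x : String} {xs : List String} {s n : ℕ}
    (hτ : H.WFType τ) (hx : H.hasAxis x n) (hfresh : x ∉ typeAxes τ)
    (hi : τ[i]? = some ⟨c * n, xs, s⟩) : H.WFType (τ.set i ⟨c, x :: xs, s⟩) := by
  refine hτ.set_cons_axes_of_nodup hx (hτ.1 _ (List.mem_of_getElem? hi))
    (List.getElem?_eq_some_iff.1 hi).1 ?_
  refine (typeAxes_set_perm_append_singleton hi rfl).nodup_iff.2 ?_
  rw [← List.concat_eq_append, List.nodup_concat]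
  exact ⟨hfresh, (wfType_iff_nodup_typeAxes.1 hτ).2⟩

lemma WFType.set_set_move_axis {τ : DType} {i j ci cj : ℕ} {x : String}
    {xsi xsj : List String} {si sj n : ℕ} (hτ : H.WFType τ) (hij : i ≠ j)
    (hx : H.hasAxis x n) (hi : τ[i]? = some ⟨ci, x :: xsi, si⟩)
    (hj : τ[j]? = some ⟨cj, xsj, sj⟩) (hdvd : n ∣ cj) :
    H.WFType ((τ.set i ⟨ci * n, xsi, si⟩).set j ⟨cj / n, x :: xsj, sj⟩) := by
  set σ := τ.set i ⟨ci * n, xsi, si⟩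
  have hσ : H.WFType σ := hτ.set_tail_axes hx hi
  have hσj : σ[j]? = some ⟨cj, xsj, sj⟩ := (List.getElem?_set_ne hij).trans hj
  have hd : H.WFDim ⟨cj / n * n, xsj, sj⟩ := by
    rw [Nat.div_mul_cancel hdvd]
    exact hσ.1 _ (List.mem_of_getElem? hσj)
  refine hσ.set_cons_axes_of_nodup hx hd (List.getElem?_eq_some_iff.1 hσj).1 ?_
  exact ((typeAxes_set_perm_append_singleton hσj rfl).trans
    (typeAxes_set_append_singleton_perm hi rfl)).nodup_iff.2 (wfType_iff_nodup_typeAxes.1 hτ).2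

end Mesh

namespace Step

variable {H : Mesh} {p : Label} {τ₁ τ₂ : DType}

lemma wfType_target (h : Step H p τ₁ τ₂) : H.WFType τ₂ := by
  cases h with
  | allGather _ hwf hx hi => exact hwf.set_tail_axes hx hi
  | dynSlice _ _ hwf hx hfresh hi => exact hwf.set_cons_axes hx hfresh hi
  | allToAll _ _ hwf hij hx hi hj hdvd => exact hwf.set_set_move_axis hij hx hi hj hdvd
  | allPermute _ hwf₂ => exact hwf₂

lemma globaltype_eq (h : Step H p τ₁ τ₂) : globaltype τ₂ = globaltype τ₁ := by
  cases h with
  | allGather _ _ _ hi => exact globaltype_set hi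
  | dynSlice _ _ _ _ _ hi => exact globaltype_set hi
  | allToAll _ _ _ hij _ hi hj =>
    rw [globaltype_set ((List.getElem?_set_ne hij).trans hj), globaltype_set hi]
  | allPermute _ _ _ hg => exact hg.symm

end Step

theorem stmt15_general (H : Mesh) (p : Label) (τ₁ τ₂ : DType) (h : Step H p τ₁ τ₂) :
    H.WFType τ₂ ∧ globaltype τ₂ = globaltype τ₁ :=
  ⟨h.wfType_target, h.globaltype_eq⟩

/-- Preservation: collective operations preserve well-formedness and the global type. -/
theorem stmt15 (H : Mesh) (p : Label) (τ₁ τ₂ : DType)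
    (h1 : H.WFType τ₁) (h : Step H p τ₁ τ₂) (hp : p ≠ Label.allPermute) :
    H.WFType τ₂ ∧ globaltype τ₂ = globaltype τ₁ :=
  stmt15_general H p τ₁ τ₂ h
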